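/- For r > 0 and B₁(y) = 1 + 2 sin²(y)/r², the 3-dimensional radial Laplacian in r satisfies Δ_{3,r}(B₁^{1/2}) = (1/r²)(B₁^{−1/2} − B₁^{−3/2}), where Δ_{3,r} u = ∂_{rr} u + (2/r) ∂_r u. -/
import Mathlib


open Real

lemma skyrme_aux_pos (c s : ℝ) (hc : 0 ≤ c) (hs : s ≠ 0) : 0 < 1 + c / s ^ 2 := by
  have : 0 ≤ c / s ^ 2 := div_nonneg hc (by positivity)
  linarith

lemma skyrme_aux_deriv (c s : ℝ) (hc : 0 ≤ c) (hs : 0 < s) :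
    HasDerivAt (fun s : ℝ => Real.sqrt (1 + c / s ^ 2))
      (-c / (s ^ 3 * Real.sqrt (1 + c / s ^ 2))) s := by
  have hB : 0 < 1 + c / s ^ 2 := skyrme_aux_pos c s hc hs.ne'
  have hsb : 0 < Real.sqrt (1 + c / s ^ 2) := Real.sqrt_pos.mpr hB
  have hpow : HasDerivAt (fun s : ℝ => s ^ 2) (2 * s) s := by
    simpa using hasDerivAt_pow 2 s
  have hdiv : HasDerivAt (fun s : ℝ => c / s ^ 2)
      ((0 * s ^ 2 - c * (2 * s)) / (s ^ 2) ^ 2) s :=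
    (hasDerivAt_const s c).div hpow (by positivity)
  have hB' : HasDerivAt (fun s : ℝ => 1 + c / s ^ 2)
      ((0 * s ^ 2 - c * (2 * s)) / (s ^ 2) ^ 2) s := hdiv.const_add 1
  have := hB'.sqrt hB.ne'
  convert this using 1
  have hsb2 : Real.sqrt (1 + c / s ^ 2) ^ 2 = 1 + c / s ^ 2 := Real.sq_sqrt hB.le
  field_simp
  ring

theorem skyrme_stmt9 (y r : ℝ) (hr : 0 < r) :
    deriv (deriv (fun s : ℝ => Real.sqrt (1 + 2 * Real.sin y ^ 2 / s ^ 2))) r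
      + (2 / r) * deriv (fun s : ℝ => Real.sqrt (1 + 2 * Real.sin y ^ 2 / s ^ 2)) r
    = (1 / r ^ 2) * ((1 + 2 * Real.sin y ^ 2 / r ^ 2) ^ (-(1/2) : ℝ)
        - (1 + 2 * Real.sin y ^ 2 / r ^ 2) ^ (-(3/2) : ℝ)) := by
  set c : ℝ := 2 * Real.sin y ^ 2 with hc_def
  have hc : 0 ≤ c := by positivity
  have hB : 0 < 1 + c / r ^ 2 := skyrme_aux_pos c r hc hr.ne'
  set sb : ℝ := Real.sqrt (1 + c / r ^ 2) with hsb_def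
  have hsb : 0 < sb := Real.sqrt_pos.mpr hB
  have hsb2 : sb ^ 2 = 1 + c / r ^ 2 := Real.sq_sqrt hB.le
  -- first derivative
  have hkey : ∀ s : ℝ, 0 < s →
      deriv (fun s : ℝ => Real.sqrt (1 + c / s ^ 2)) s
        = -c / (s ^ 3 * Real.sqrt (1 + c / s ^ 2)) := fun s hs =>
    (skyrme_aux_deriv c s hc hs).deriv
  have hEq : deriv (fun s : ℝ => Real.sqrt (1 + c / s ^ 2))
      =ᶠ[nhds r] fun s => -c / (s ^ 3 * Real.sqrt (1 + c / s ^ 2)) := by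
    filter_upwards [eventually_gt_nhds hr] with s hs using hkey s hs
  -- second derivative
  have hD : HasDerivAt (fun s : ℝ => s ^ 3 * Real.sqrt (1 + c / s ^ 2))
      (3 * r ^ 2 * sb + r ^ 3 * (-c / (r ^ 3 * sb))) r := by
    have h1 : HasDerivAt (fun s : ℝ => s ^ 3) (3 * r ^ 2) r := by
      simpa using hasDerivAt_pow 3 r
    exact h1.mul (skyrme_aux_deriv c r hc hr)
  have hDne : r ^ 3 * sb ≠ 0 := by positivity
  have hg : HasDerivAt (fun s : ℝ => -c / (s ^ 3 * Real.sqrt (1 + c / s ^ 2)))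
      ((0 * (r ^ 3 * sb) - (-c) * (3 * r ^ 2 * sb + r ^ 3 * (-c / (r ^ 3 * sb))))
        / (r ^ 3 * sb) ^ 2) r :=
    (hasDerivAt_const r (-c)).div hD hDne
  have h2 : deriv (deriv (fun s : ℝ => Real.sqrt (1 + c / s ^ 2))) r
      = (0 * (r ^ 3 * sb) - (-c) * (3 * r ^ 2 * sb + r ^ 3 * (-c / (r ^ 3 * sb))))
        / (r ^ 3 * sb) ^ 2 := by
    rw [hEq.deriv_eq]
    exact hg.deriv
  rw [h2, hkey r hr, ← hsb_def]
  -- rpow to sqrt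
  have e1 : (1 + c / r ^ 2) ^ (-(1/2) : ℝ) = sb⁻¹ := by
    rw [Real.rpow_neg hB.le, hsb_def, Real.sqrt_eq_rpow]
  have e2 : (1 + c / r ^ 2) ^ (-(3/2) : ℝ) = (sb ^ 3)⁻¹ := by
    rw [Real.rpow_neg hB.le, hsb_def, Real.sqrt_eq_rpow,
      ← Real.rpow_natCast ((1 + c / r ^ 2) ^ ((1:ℝ)/2)) 3, ← Real.rpow_mul hB.le]
    norm_num
  rw [e1, e2]
  have hc2 : c = (sb ^ 2 - 1) * r ^ 2 := by
    field_simp at hsb2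
    linarith
  rw [hc2]
  field_simp
  ring
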